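/- Let v_{i,k} be the coefficients of powers of the companion matrix (M^k = Σ_{i=1}^N v_{i,k} M^{N-i}). For every k with 2N ≤ k ≤ 3N and every i ≤ 3N - k, one has v_{i,k} = Σ_{a+b = i+k-N, 1≤a,b≤N} w_a·w_b + (terms of total degree at least 3 in w_1,…,w_N). -/

import Mathlib

/-!
Applying both sides of `M^k = ∑ᵢ v_{i,k} M^{N-i}` to the last basis vector `e_N`, which `M`
shifts down (`M e_{j+1} = e_j`), shows that `(v_{i,k})ᵢ` is the vector `M^k e_N = M^{k-N+1} e_1`.
The columns `u_m = M^m e_1` satisfy `u_{m+1,i} = -w_i u_{m,1} + u_{m,i+1}` (with `u_{m,N+1} = 0`).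
Setting `w_0 = -1` and `w_a = 0` for `a > N`, induction on `m` gives
`u_{m+1,i} ≡ ∑_{t=0}^{m} w_{i+m-t} w_t` modulo the cube of the ideal generated by the `w_a`:
in the step, the linear part `-w_m` of `u_{m,1}` contributes the new term `w_i w_m`, and the rest
of `w_i u_{m,1}` lies in the cube. For `v_{i,k} = u_{k-N+1,i}` with `k ≥ 2N` the linear term
`t = 0` has index `i + k - N > N`, and dropping the vanishing terms leaves exactly the pairs
`1 ≤ a, b ≤ N`.
-/

open MvPolynomial Finset
open scoped Matrix

-- Indices are `0`-based: `u m i` is entry `i + 1` of `u_m`, whose weight is `W (i + 1)`.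
theorem sub_sum_mem_pow_three_of_recursion {R : Type*} [CommRing R] {I : Ideal R} {W : ℕ → R}
    (hW₀ : W 0 = -1) (hW : ∀ a, W (a + 1) ∈ I) {u : ℕ → ℕ → R}
    (hu₀ : ∀ i, u 0 i = if i = 0 then 1 else 0)
    (hu : ∀ m i, u (m + 1) i = -W (i + 1) * u m 0 + u m (i + 1)) (m i : ℕ) :
    u (m + 1) i - ∑ t ∈ range (m + 1), W (i + m + 1 - t) * W t ∈ I ^ 3 := by
  induction m generalizing i with
  | zero => simp [hu, hu₀, hW₀]
  | succ m ih =>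
    set Q := ∑ t ∈ range m, W (m - t) * W (t + 1)
    have hQ : Q ∈ I ^ 2 := sum_mem fun t ht => by
      obtain ⟨a, ha⟩ : ∃ a, m - t = a + 1 := ⟨m - t - 1, by grind⟩
      rw [pow_two, ha]
      exact Ideal.mul_mem_mul (hW a) (hW t)
    have hsum₀ : ∑ t ∈ range (m + 1), W (0 + m + 1 - t) * W t = Q - W (m + 1) := by
      rw [sum_range_succ']
      simp only [zero_add, Nat.add_sub_add_right, Nat.sub_zero, hW₀, Q]
      ring
    have hsum : ∑ t ∈ range (m + 1 + 1), W (i + (m + 1) + 1 - t) * W t =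
        ∑ t ∈ range (m + 1), W (i + 1 + m + 1 - t) * W t + W (i + 1) * W (m + 1) := by
      rw [sum_range_succ, show i + (m + 1) + 1 - (m + 1) = i + 1 by omega,
        show i + (m + 1) + 1 = i + 1 + m + 1 by ring]
    have hsplit : u (m + 1 + 1) i - ∑ t ∈ range (m + 1 + 1), W (i + (m + 1) + 1 - t) * W t =
        -W (i + 1) * (Q + (u (m + 1) 0 - ∑ t ∈ range (m + 1), W (0 + m + 1 - t) * W t)) +
        (u (m + 1) (i + 1) - ∑ t ∈ range (m + 1), W (i + 1 + m + 1 - t) * W t) := by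
      rw [hu, hsum, hsum₀]
      ring
    rw [hsplit]
    refine add_mem ?_ (ih (i + 1))
    rw [pow_succ']
    exact Ideal.mul_mem_mul (neg_mem (hW i))
      (add_mem hQ (Ideal.pow_le_pow_right (by norm_num) (ih 0)))

theorem sum_range_mul_eq_sum_filter_Icc {R : Type*} [NonUnitalNonAssocSemiring R] {W : ℕ → R}
    {N n L : ℕ} (hW : ∀ a, N < a → W a = 0) (hn : N < n) (hL : N < L) :
    ∑ t ∈ range L, W (n - t) * W t =
      ∑ q ∈ (Icc 1 N ×ˢ Icc 1 N).filter (fun q => q.1 + q.2 = n), W q.1 * W q.2 := by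
  symm
  refine sum_bij_ne_zero (fun q _ _ => q.2) ?_ ?_ ?_ ?_
  · intro q hq _
    simp only [mem_filter, mem_product, mem_Icc] at hq
    simp only [mem_range]
    omega
  · intro q hq _ q' hq' _ h
    simp only [mem_filter, mem_product, mem_Icc] at hq hq'
    exact Prod.ext (by omega) h
  · intro t _ hne
    have h₁ : t ≤ N := by
      by_contra h
      exact hne (by rw [hW t (by omega), mul_zero])
    have h₂ : n - t ≤ N := by
      by_contra h
      exact hne (by rw [hW _ (by omega), zero_mul])
    refine ⟨(n - t, t), ?_, hne, rfl⟩
    simp only [mem_filter, mem_product, mem_Icc]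
    omega
  · intro q hq _
    simp only [mem_filter, mem_product, mem_Icc] at hq
    rw [show q.1 = n - q.2 by omega]

section ExtendByZero

variable {α : Type*} {N : ℕ}

def extendByZero [Zero α] (u : Fin N → α) (i : ℕ) : α :=
  if h : i < N then u ⟨i, h⟩ else 0

@[simp]
theorem extendByZero_val [Zero α] (u : Fin N → α) (i : Fin N) : extendByZero u i = u i := by
  simp [extendByZero]

theorem extendByZero_single [Zero α] (k : Fin N) (a : α) (j : ℕ) :
    extendByZero (Pi.single k a) j = if j = k then a else 0 := by
  unfold extendByZero
  split_ifs <;> simp_all [Fin.ext_iff]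

theorem extendByZero_mem [Semiring α] {I : Ideal α} {u : Fin N → α} (hu : ∀ j, u j ∈ I)
    (i : ℕ) : extendByZero u i ∈ I := by
  unfold extendByZero
  split_ifs
  exacts [hu _, zero_mem I]

theorem sum_ite_val_eq_extendByZero [AddCommMonoid α] (u : Fin N → α) (a : ℕ) :
    ∑ j : Fin N, (if (j : ℕ) = a then u j else 0) = extendByZero u a := by
  unfold extendByZero
  split_ifs with h
  · rw [sum_eq_single ⟨a, h⟩] <;> simp_all [Fin.ext_iff]
  · exact sum_eq_zero fun j _ => if_neg (by omega)

end ExtendByZero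

theorem Matrix.mulVec_eq_of_eq_sum_smul {R n : Type*} [CommSemiring R] [Fintype n]
    [DecidableEq n] {A : Matrix n n R} {B : n → Matrix n n R} {c x : n → R}
    (hA : A = ∑ j, c j • B j) (hB : ∀ j, B j *ᵥ x = Pi.single j 1) : A *ᵥ x = c := by
  simp [hA, Matrix.sum_mulVec, Matrix.smul_mulVec, hB, ← pi_eq_sum_univ']

section Companion

variable {R : Type*} [CommRing R] {N : ℕ}

def companion (w : Fin N → R) : Matrix (Fin N) (Fin N) R :=
  Matrix.of fun i j => if (j : ℕ) = 0 then -w i else if (j : ℕ) = (i : ℕ) + 1 then 1 else 0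

theorem companion_mulVec_apply (w u : Fin N → R) (i : Fin N) :
    (companion w *ᵥ u) i = -w i * extendByZero u 0 + extendByZero u (i + 1) := by
  have hentry : ∀ j, companion w i j * u j =
      -w i * (if (j : ℕ) = 0 then u j else 0) + (if (j : ℕ) = i + 1 then u j else 0) := by
    intro j
    simp only [companion, Matrix.of_apply]
    split_ifs <;> first | omega | ring
  simp only [Matrix.mulVec, dotProduct, hentry, sum_add_distrib, ← mul_sum,
    sum_ite_val_eq_extendByZero]

theorem extendByZero_companion_mulVec (w u : Fin N → R) (i : ℕ) :
    extendByZero (companion w *ᵥ u) i =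
      -extendByZero w i * extendByZero u 0 + extendByZero u (i + 1) := by
  by_cases h : i < N
  · simp only [extendByZero, dif_pos h, companion_mulVec_apply]
  · simp [extendByZero, h, show ¬i + 1 < N by omega]

theorem companion_mulVec_single (w : Fin N → R) {j k : Fin N} (h : (j : ℕ) + 1 = k) :
    companion w *ᵥ Pi.single k 1 = Pi.single j 1 := by
  ext i
  simp [companion, Pi.single_apply, Fin.ext_iff, ← h, eq_comm]

theorem companion_pow_mulVec_single (w : Fin N → R) (m : ℕ) {j k : Fin N}
    (h : (j : ℕ) + m = k) : companion w ^ m *ᵥ Pi.single k 1 = Pi.single j 1 := by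
  induction m generalizing k with
  | zero => rw [pow_zero, Matrix.one_mulVec, Fin.ext (h.symm.trans (add_zero _))]
  | succ m ih =>
    rw [pow_succ, ← Matrix.mulVec_mulVec,
      companion_mulVec_single w (j := ⟨j + m, by omega⟩) (by simp; omega), ih rfl]

theorem eq_companion_pow_mulVec_single_zero (w : Fin N → R) (hN : 0 < N) {c : Fin N → R}
    {m : ℕ} (h : companion w ^ (m + (N - 1)) = ∑ i, c i • companion w ^ (N - 1 - (i : ℕ))) :
    c = companion w ^ m *ᵥ Pi.single ⟨0, hN⟩ 1 := by
  have hlast : ∀ j : Fin N,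
      companion w ^ (N - 1 - (j : ℕ)) *ᵥ Pi.single ⟨N - 1, by omega⟩ 1 = Pi.single j 1 :=
    fun j => companion_pow_mulVec_single w _ (by simp; omega)
  rw [← Matrix.mulVec_eq_of_eq_sum_smul h hlast, pow_add, ← Matrix.mulVec_mulVec,
    companion_pow_mulVec_single w (N - 1) (j := ⟨0, hN⟩) (by simp)]

theorem companion_pow_mulVec_single_zero_sub_sum_mem_pow_three (w : Fin N → R) (hN : 0 < N)
    {I : Ideal R} (hw : ∀ j, w j ∈ I) {W : ℕ → R} (hW₀ : W 0 = -1)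
    (hW : ∀ a, W (a + 1) = extendByZero w a) (m : ℕ) (i : Fin N) :
    (companion w ^ (m + 1) *ᵥ Pi.single ⟨0, hN⟩ 1) i -
      ∑ t ∈ range (m + 1), W (i + m + 1 - t) * W t ∈ I ^ 3 := by
  have h := sub_sum_mem_pow_three_of_recursion
    (u := fun m => extendByZero (companion w ^ m *ᵥ Pi.single ⟨0, hN⟩ 1)) hW₀
    (fun a => hW a ▸ extendByZero_mem hw a)
    (fun j => by simp only [pow_zero, Matrix.one_mulVec, extendByZero_single])
    (fun m j => by
      simp only [pow_succ', ← Matrix.mulVec_mulVec, extendByZero_companion_mulVec, hW]) m i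
  rwa [extendByZero_val] at h

end Companion

theorem companion_power_coefficients_quadratic_part'_general (N : ℕ)
    (M : Matrix (Fin N) (Fin N) (MvPolynomial (Fin N) ℝ))
    (hM : ∀ i j : Fin N, M i j =
      if (j : ℕ) = 0 then -X i else if (j : ℕ) = (i : ℕ) + 1 then 1 else 0)
    (v : Fin N → ℕ → MvPolynomial (Fin N) ℝ)
    (hv : ∀ k : ℕ, M ^ k = ∑ i : Fin N, v i k • M ^ (N - 1 - (i : ℕ)))
    (W : ℕ → MvPolynomial (Fin N) ℝ)
    (hW : ∀ a : ℕ, W a =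
      if a = 0 then -1 else if h : a - 1 < N then X ⟨a - 1, h⟩ else 0) :
    ∀ k : ℕ, 2 * N ≤ k → k ≤ 3 * N → ∀ i : Fin N, (i : ℕ) + 1 + k ≤ 3 * N →
      ∃ E : MvPolynomial (Fin N) ℝ,
        (∀ d ∈ E.support, 3 ≤ d.sum fun _ e => e) ∧
        v i k =
          (∑ q ∈ ((Finset.Icc 1 N) ×ˢ (Finset.Icc 1 N)).filter
              (fun q => q.1 + q.2 + N = (i : ℕ) + 1 + k),
            W q.1 * W q.2) + E := by
  intro k hk₂ _ i _
  obtain rfl : M = companion X := Matrix.ext hM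
  obtain ⟨m, rfl⟩ : ∃ m, k = m + 1 + (N - 1) := ⟨k - N, by omega⟩
  have hN := i.pos
  have hW_large : ∀ a, N < a → W a = 0 := fun a ha => by
    simp [hW, show a ≠ 0 by omega, show ¬a - 1 < N by omega]
  have hE := companion_pow_mulVec_single_zero_sub_sum_mem_pow_three X hN
    (I := idealOfVars (Fin N) ℝ) (W := W) (fun j => Ideal.subset_span ⟨j, rfl⟩) (by simp [hW])
    (fun a => by simp [hW, extendByZero]) m i
  rw [← eq_companion_pow_mulVec_single_zero X hN (hv (m + 1 + (N - 1))),
    sum_range_mul_eq_sum_filter_Icc hW_large (by omega) (by omega)] at hE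
  refine ⟨_, (mem_pow_idealOfVars_iff 3 _).1 hE, ?_⟩
  rw [filter_congr fun q _ => show q.1 + q.2 + N = i + 1 + (m + 1 + (N - 1)) ↔
    q.1 + q.2 = i + m + 1 by omega, add_sub_cancel]

/-- Let `v_{i,k}` be the coefficients of powers of the companion matrix
(`M^k = ∑_{i=1}^N v_{i,k} M^{N-i}`, over `ℝ[w_1,…,w_N]`).  For every `k` with
`2N ≤ k ≤ 3N` and every `i ≤ 3N - k`, one has
`v_{i,k} = ∑_{a+b = i+k-N, 1≤a,b≤N} w_a·w_b + (terms of total degree ≥ 3)`.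
Below `i : Fin N` represents the `1`-based index `i+1` and the conditions are written
without natural subtraction. -/
theorem companion_power_coefficients_quadratic_part' (N : ℕ) (hN : 0 < N)
    (M : Matrix (Fin N) (Fin N) (MvPolynomial (Fin N) ℝ))
    (hM : ∀ i j : Fin N, M i j =
      if (j : ℕ) = 0 then -X i else if (j : ℕ) = (i : ℕ) + 1 then 1 else 0)
    (v : Fin N → ℕ → MvPolynomial (Fin N) ℝ)
    (hv : ∀ k : ℕ, M ^ k = ∑ i : Fin N, v i k • M ^ (N - 1 - (i : ℕ)))
    (W : ℕ → MvPolynomial (Fin N) ℝ)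
    (hW : ∀ a : ℕ, W a =
      if a = 0 then -1 else if h : a - 1 < N then X ⟨a - 1, h⟩ else 0) :
    ∀ k : ℕ, 2 * N ≤ k → k ≤ 3 * N → ∀ i : Fin N, (i : ℕ) + 1 + k ≤ 3 * N →
      ∃ E : MvPolynomial (Fin N) ℝ,
        (∀ d ∈ E.support, 3 ≤ d.sum fun _ e => e) ∧
        v i k =
          (∑ q ∈ ((Finset.Icc 1 N) ×ˢ (Finset.Icc 1 N)).filter
              (fun q => q.1 + q.2 + N = (i : ℕ) + 1 + k),
            W q.1 * W q.2) + E :=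
  companion_power_coefficients_quadratic_part'_general N M hM v hv W hW
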